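/- arXiv:1009.3454 — 2 statements merged into one kernel-verified Lean document; each statement's English description precedes it below -/
import Mathlib

section
/- Let (K, t, c, λ) be a weak mixed distributive law in Cat. Then the composite (λ ▷ c) ∘ (t ◁ δ) : tc ⟶ ctc is unchanged by precomposition with the idempotent Θ = (ε ▷ t ▷ c) ∘ (λ ▷ c) ∘ (t ◁ δ), i.e. (λ ▷ c) ∘ (t ◁ δ) ∘ Θ = (λ ▷ c) ∘ (t ◁ δ); moreover it is unchanged by postcomposition with c ◁ Θ: (c ◁ Θ) ∘ (λ ▷ c) ∘ (t ◁ δ) = (λ ▷ c) ∘ (t ◁ δ). -/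
open CategoryTheory

universe v₁ u₁ v₂ u₂

variable {K : Type u₁} [Category.{v₁} K]

/-- A weak mixed distributive law `λ : tc ⟶ ct` between a monad `t` and a comonad `c`
on a category `K`, satisfying the four axioms of Böhm–Lack–Street, stated componentwise. -/
structure WeakMixedDistLaw (t : CategoryTheory.Monad K) (c : CategoryTheory.Comonad K) where
  l : (c.toFunctor ⋙ t.toFunctor) ⟶ (t.toFunctor ⋙ c.toFunctor)
  mul_compat : ∀ X : K, t.μ.app (c.obj X) ≫ l.app X =
    t.map (l.app X) ≫ l.app (t.obj X) ≫ c.map (t.μ.app X)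
  comul_compat : ∀ X : K, t.map (c.δ.app X) ≫ l.app (c.obj X) ≫ c.map (l.app X) =
    l.app X ≫ c.δ.app (t.obj X)
  weak_unit : ∀ X : K, t.η.app (c.obj X) ≫ l.app X =
    c.δ.app X ≫ c.map (t.η.app (c.obj X)) ≫ c.map (l.app X) ≫ c.map (c.ε.app (t.obj X))
  weak_counit : ∀ X : K, l.app X ≫ c.ε.app (t.obj X) =
    t.map (t.η.app (c.obj X)) ≫ t.map (l.app X) ≫ t.map (c.ε.app (t.obj X)) ≫ t.μ.app X

/-!
The map `f = λc ∘ tδ : tc ⟶ ctc` is a coassociative, though not counital, coaction of `c`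
on `tc`: coassociativity is the comultiplicativity axiom of `λ` together with the
coassociativity of `δ`. For any such `f` the idempotent `Θ = ε ∘ f` is absorbed by `f` on
both sides, by the two counit laws of the comonad.
-/

namespace CategoryTheory.Comonad

variable {c : Comonad K} {A : K} {f : A ⟶ c.obj A}

theorem comp_counit_comp_of_coassoc (hf : f ≫ c.map f = f ≫ c.δ.app A) :
    (f ≫ c.ε.app A) ≫ f = f :=
  calc (f ≫ c.ε.app A) ≫ f = f ≫ c.map f ≫ c.ε.app (c.obj A) := by
        rw [Category.assoc]; exact congrArg (f ≫ ·) (c.ε.naturality f).symm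
    _ = f ≫ c.δ.app A ≫ c.ε.app (c.obj A) := by rw [reassoc_of% hf]
    _ = f := by rw [Comonad.left_counit, Category.comp_id]

theorem comp_map_comp_counit_of_coassoc (hf : f ≫ c.map f = f ≫ c.δ.app A) :
    f ≫ c.map (f ≫ c.ε.app A) = f := by
  rw [Functor.map_comp, reassoc_of% hf, Comonad.right_counit, Category.comp_id]

end CategoryTheory.Comonad

namespace WeakMixedDistLaw

variable {t : Monad K} {c : Comonad K}

def coaction (W : WeakMixedDistLaw t c) (X : K) : t.obj (c.obj X) ⟶ c.obj (t.obj (c.obj X)) :=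
  t.map (c.δ.app X) ≫ W.l.app (c.obj X)

theorem coaction_comp_map_coaction (W : WeakMixedDistLaw t c) (X : K) :
    W.coaction X ≫ c.map (W.coaction X) = W.coaction X ≫ c.δ.app (t.obj (c.obj X)) := by
  have hnat : W.l.app (c.obj X) ≫ c.map (t.map (c.δ.app X)) =
      t.map (c.map (c.δ.app X)) ≫ W.l.app (c.obj (c.obj X)) :=
    (W.l.naturality (c.δ.app X)).symm
  calc W.coaction X ≫ c.map (W.coaction X)
      = t.map (c.δ.app X) ≫ t.map (c.map (c.δ.app X)) ≫ W.l.app (c.obj (c.obj X)) ≫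
          c.map (W.l.app (c.obj X)) := by
        rw [coaction, Functor.map_comp, Category.assoc, reassoc_of% hnat]
    _ = t.map (c.δ.app X) ≫ t.map (c.δ.app (c.obj X)) ≫ W.l.app (c.obj (c.obj X)) ≫
          c.map (W.l.app (c.obj X)) := by
        rw [← Functor.map_comp_assoc, Comonad.coassoc, Functor.map_comp_assoc]
    _ = W.coaction X ≫ c.δ.app (t.obj (c.obj X)) := by
        rw [W.comul_compat (c.obj X), coaction, Category.assoc]

end WeakMixedDistLaw

/-- The composite (λ c) ∘ (t δ) : tc ⟶ ctc is unchanged by precomposition with the canonical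
idempotent Θ and by postcomposition with c ◁ Θ. -/
theorem lambda_c_t_delta_absorbs_idempotent (t : CategoryTheory.Monad K)
    (c : CategoryTheory.Comonad K) (W : WeakMixedDistLaw t c) :
    (∀ X : K,
      (t.map (c.δ.app X) ≫ W.l.app (c.obj X) ≫ c.ε.app (t.obj (c.obj X))) ≫
        t.map (c.δ.app X) ≫ W.l.app (c.obj X) =
      t.map (c.δ.app X) ≫ W.l.app (c.obj X)) ∧
    (∀ X : K,
      (t.map (c.δ.app X) ≫ W.l.app (c.obj X)) ≫
        c.map (t.map (c.δ.app X) ≫ W.l.app (c.obj X) ≫ c.ε.app (t.obj (c.obj X))) =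
      t.map (c.δ.app X) ≫ W.l.app (c.obj X)) := by
  refine ⟨fun X => ?_, fun X => ?_⟩
  · simpa only [WeakMixedDistLaw.coaction, Category.assoc] using
      Comonad.comp_counit_comp_of_coassoc (W.coaction_comp_map_coaction X)
  · simpa only [WeakMixedDistLaw.coaction, Category.assoc] using
      Comonad.comp_map_comp_counit_of_coassoc (W.coaction_comp_map_coaction X)
end

section
/- Let (K, t, c, λ) be a weak mixed distributive law in Cat, with splitting (a, π, σ), canonical action α, coaction γ, η₁ = π ∘ (η c), and ε₁ = (t ε) ∘ σ. Then (c ◁ ε₁) ∘ (c ◁ α) ∘ (λ ▷ a) ∘ (t ◁ γ) ∘ (t ◁ η₁) = λ (first diagram of the key Lemma of Böhm–Lack–Street). -/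
/-!
Since `π ≫ σ = Θ`, every occurrence of `π ≫ σ` in the diagram can be replaced by the idempotent
`Θ = (ε t c) ∘ (λ c) ∘ (t δ)`. By comultiplicativity of `λ` and the counit laws, `Θ` is absorbed by
`λ` and by `(λ c) ∘ (t δ)`, and it turns `t ε` into `ε t ∘ λ`; by multiplicativity of `λ`, `t Θ`
is then absorbed by `λ ∘ μ c` too. What remains is `λ` itself, by the unit law of `t` and the counit
law of `c`.
-/

open CategoryTheory

universe v₁ u₁ v₂ u₂

variable {K : Type u₁} [Category.{v₁} K]

namespace WeakMixedDistLaw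

variable {t : CategoryTheory.Monad K} {c : CategoryTheory.Comonad K} (W : WeakMixedDistLaw t c)

def theta (X : K) : t.obj (c.obj X) ⟶ t.obj (c.obj X) :=
  t.map (c.δ.app X) ≫ W.l.app (c.obj X) ≫ c.ε.app (t.obj (c.obj X))

lemma l_naturality {X Y : K} (f : X ⟶ Y) :
    t.map (c.map f) ≫ W.l.app Y = W.l.app X ≫ c.map (t.map f) :=
  W.l.naturality f

lemma map_comul_comp_l_comp_map_l_comp_map_counit (X : K) :
    t.map (c.δ.app X) ≫ W.l.app (c.obj X) ≫ c.map (W.l.app X) ≫ c.map (c.ε.app (t.obj X)) =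
      W.l.app X := by
  rw [reassoc_of% (W.comul_compat X), Comonad.right_counit, Category.comp_id]

lemma theta_comp_l (X : K) : W.theta X ≫ W.l.app X = W.l.app X := by
  rw [theta, Category.assoc, Category.assoc, ← c.counit_naturality,
    reassoc_of% (W.comul_compat X)]
  simp only [Functor.comp_obj, Comonad.left_counit, Category.comp_id]

lemma theta_comp_map_counit (X : K) :
    W.theta X ≫ t.map (c.ε.app X) = W.l.app X ≫ c.ε.app (t.obj X) := by
  rw [theta, Category.assoc, Category.assoc, ← c.counit_naturality,
    ← reassoc_of% (W.l_naturality (c.ε.app X)), ← Functor.map_comp_assoc,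
    c.right_counit, t.map_id, Category.id_comp]
  rfl

lemma theta_comp_map_comul_comp_l (X : K) :
    W.theta X ≫ t.map (c.δ.app X) ≫ W.l.app (c.obj X) =
      t.map (c.δ.app X) ≫ W.l.app (c.obj X) := by
  rw [theta, Category.assoc, Category.assoc, ← c.counit_naturality_assoc,
    ← c.counit_naturality, ← reassoc_of% (W.l_naturality (c.δ.app X)),
    ← Functor.map_comp_assoc, Comonad.coassoc, Functor.map_comp_assoc,
    reassoc_of% (W.comul_compat (c.obj X))]
  simp only [Functor.comp_obj, Comonad.left_counit, Category.comp_id]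

lemma map_theta_comp_mu_comp_l (X : K) :
    t.map (W.theta X) ≫ t.μ.app (c.obj X) ≫ W.l.app X = t.μ.app (c.obj X) ≫ W.l.app X := by
  rw [W.mul_compat, ← Functor.map_comp_assoc, theta_comp_l]

lemma map_unit_comp_map_l_comp_l_comp_map_mu (X : K) :
    t.map (t.η.app (c.obj X)) ≫ t.map (W.l.app X) ≫ W.l.app (t.obj X) ≫ c.map (t.μ.app X) =
      W.l.app X := by
  rw [← W.mul_compat, reassoc_of% (t.right_unit (c.obj X))]

end WeakMixedDistLaw

theorem first_key_diagram_general (t : CategoryTheory.Monad K) (c : CategoryTheory.Comonad K)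
    (W : WeakMixedDistLaw t c) (a : K ⥤ K) (π : (c.toFunctor ⋙ t.toFunctor) ⟶ a) (σ : a ⟶ (c.toFunctor ⋙ t.toFunctor))
    (hsplit : ∀ X : K, π.app X ≫ σ.app X =
      t.map (c.δ.app X) ≫ W.l.app (c.obj X) ≫ c.ε.app (t.obj (c.obj X))) :
    ∀ X : K,
      t.map (t.η.app (c.obj X) ≫ π.app X) ≫
        t.map (σ.app X ≫ t.map (c.δ.app X) ≫ W.l.app (c.obj X) ≫ c.map (π.app X)) ≫
        W.l.app (a.obj X) ≫
        c.map (t.map (σ.app X) ≫ t.μ.app (c.obj X) ≫ π.app X) ≫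
        c.map (σ.app X ≫ t.map (c.ε.app X)) =
      W.l.app X := by
  intro X
  have hΘ : π.app X ≫ σ.app X = W.theta X := hsplit X
  calc _ = t.map (t.η.app (c.obj X) ≫ W.theta X ≫ t.map (c.δ.app X) ≫ W.l.app (c.obj X)) ≫
          W.l.app (t.obj (c.obj X)) ≫
          c.map (t.map (W.theta X) ≫ t.μ.app (c.obj X) ≫ W.theta X ≫ t.map (c.ε.app X)) := by
        rw [← hΘ]
        simp only [Functor.map_comp, Category.assoc]
        rw [reassoc_of% (W.l_naturality (π.app X))]
    _ = t.map (t.η.app (c.obj X) ≫ t.map (c.δ.app X) ≫ W.l.app (c.obj X)) ≫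
          W.l.app (t.obj (c.obj X)) ≫
          c.map (t.μ.app (c.obj X) ≫ W.l.app X ≫ c.ε.app (t.obj X)) := by
        rw [W.theta_comp_map_comul_comp_l, W.theta_comp_map_counit,
          reassoc_of% (W.map_theta_comp_mu_comp_l X)]
    _ = W.l.app X := by
        rw [← t.unit_naturality_assoc (f := c.δ.app X)]
        simp only [Functor.comp_obj, Functor.map_comp, Category.assoc]
        rw [reassoc_of% (W.map_unit_comp_map_l_comp_l_comp_map_mu (c.obj X)),
          W.map_comul_comp_l_comp_map_l_comp_map_counit]

/-- First diagram of the key Lemma: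
(c ε₁) ∘ (c α) ∘ (λ a) ∘ (t γ) ∘ (t η₁) = λ. -/
theorem first_key_diagram (t : CategoryTheory.Monad K) (c : CategoryTheory.Comonad K)
    (W : WeakMixedDistLaw t c) (a : K ⥤ K) (π : (c.toFunctor ⋙ t.toFunctor) ⟶ a) (σ : a ⟶ (c.toFunctor ⋙ t.toFunctor))
    (hsec : σ ≫ π = 𝟙 a)
    (hsplit : ∀ X : K, π.app X ≫ σ.app X =
      t.map (c.δ.app X) ≫ W.l.app (c.obj X) ≫ c.ε.app (t.obj (c.obj X))) :
    ∀ X : K,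
      t.map (t.η.app (c.obj X) ≫ π.app X) ≫
        t.map (σ.app X ≫ t.map (c.δ.app X) ≫ W.l.app (c.obj X) ≫ c.map (π.app X)) ≫
        W.l.app (a.obj X) ≫
        c.map (t.map (σ.app X) ≫ t.μ.app (c.obj X) ≫ π.app X) ≫
        c.map (σ.app X ≫ t.map (c.ε.app X)) =
      W.l.app X :=
  first_key_diagram_general t c W a π σ hsplit
end
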